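/- There is no (2+1)-color connected colored edge graph G(V,E,C,f) with |V| ≤ 5 and |C| = 3. -/

import Mathlib

/-!
Deleting two of the three colours must leave the remaining colour class connected on all `n`
vertices, so each colour class has at least `n - 1` edges. The three classes are disjoint, hence
`3 (n - 1) ≤ n.choose 2`, which fails for `2 ≤ n ≤ 5`; and `n ≥ 2` because some edge exists.
-/

open Finset

namespace SimpleGraph

variable {V α : Type*} (G : SimpleGraph V) (f : Sym2 V → α)

abbrev colorClass (c : α) : SimpleGraph V := G.deleteEdges (f ⁻¹' {c})ᶜ

lemma card_mul_card_sub_one_le_card_edgeFinset [Fintype V] [DecidableEq V] [DecidableRel G.Adj]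
    [Fintype α] [DecidableEq α] (h : ∀ c, (G.colorClass f c).Connected) :
    Fintype.card α * (Fintype.card V - 1) ≤ #G.edgeFinset := by
  have hclass (c : α) : Fintype.card V - 1 ≤ #{e ∈ G.edgeFinset | f e = c} := by
    have hedges : (G.colorClass f c).edgeSet = ↑{e ∈ G.edgeFinset | f e = c} := by
      ext e
      simp [and_comm]
    have := (h c).card_vert_le_card_edgeSet_add_one
    rw [hedges, Nat.card_coe_set_eq, Set.ncard_coe_finset, Nat.card_eq_fintype_card] at this
    omega
  calc Fintype.card α * (Fintype.card V - 1)
      = ∑ _c : α, (Fintype.card V - 1) := by simp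
    _ ≤ ∑ c : α, #{e ∈ G.edgeFinset | f e = c} := sum_le_sum fun c _ => hclass c
    _ = #G.edgeFinset := (card_eq_sum_card_fiberwise fun e _ => mem_univ (f e)).symm

end SimpleGraph

theorem choose_two_lt_three_mul_sub_one {n : ℕ} (h2 : 2 ≤ n) (h5 : n ≤ 5) :
    n.choose 2 < 3 * (n - 1) := by
  interval_cases n <;> decide

/-- There is no `(2+1)`-color connected colored edge graph with
`|V| ≤ 5` and `|C| = 3`. -/
theorem stmt_9 (n : ℕ) (hn : n ≤ 5) :
    ¬ ∃ (G : SimpleGraph (Fin n)) (f : Sym2 (Fin n) → Fin 3),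
        (∀ c : Fin 3, ∃ e ∈ G.edgeSet, f e = c) ∧
        ∀ Ct : Finset (Fin 3), Ct.card = 2 →
          ∀ A B : Fin n, (G.deleteEdges (f ⁻¹' ↑Ct)).Reachable A B := by
  rintro ⟨G, f, hsurj, hconn⟩
  classical
  obtain ⟨⟨a, b⟩, hab, -⟩ := hsurj 0
  have h2 : 2 ≤ n := by
    simpa [Nat.succ_le_iff] using Fintype.one_lt_card_iff_nontrivial.mpr ⟨a, b, G.ne_of_adj hab⟩
  have : Nonempty (Fin n) := ⟨a⟩
  have hclass (c : Fin 3) : (G.colorClass f c).Connected := by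
    refine ⟨fun A B => ?_⟩
    simpa [SimpleGraph.colorClass] using hconn {c}ᶜ (by simp [card_compl]) A B
  have hlower := G.card_mul_card_sub_one_le_card_edgeFinset f hclass
  have hupper := G.card_edgeFinset_le_card_choose_two
  simp only [Fintype.card_fin] at hlower hupper
  have := choose_two_lt_three_mul_sub_one h2 hn
  omega
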